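/- arXiv:2012.00177 — 2 statements merged into one kernel-verified Lean document; each statement's English description precedes it below -/
import Mathlib

section
/- The ternary Cantor set C is 3-self-similar; indeed its 3-kernel equals the four-element collection {C, {0,1}, {0}, {1}}. -/
/-- The kernel set `K^k_{a,b}` of `X ⊆ [0,1]`:
`{k^a x − b : x ∈ X ∩ [b/k^a, (b+1)/k^a]}`. -/
noncomputable def kernelSet1 (k a : ℕ) (b : ℤ) (X : Set ℝ) : Set ℝ :=
  (fun x => (k : ℝ) ^ a * x - (b : ℝ)) ''
    (X ∩ Set.Icc ((b : ℝ) / (k : ℝ) ^ a) (((b : ℝ) + 1) / (k : ℝ) ^ a))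

/-- The `k`-kernel of `X ⊆ [0,1]`: the collection of the (nonempty) sets `K^k_{a,b}`
over all `a ≥ 0` and `0 ≤ b < k^a`. -/
noncomputable def kKernel1 (k : ℕ) (X : Set ℝ) : Set (Set ℝ) :=
  {S | S.Nonempty ∧ ∃ (a : ℕ) (b : ℤ), 0 ≤ b ∧ b < (k : ℤ) ^ a ∧ S = kernelSet1 k a b X}

lemma preCantorSet_subset_unitInterval' (n : ℕ) : preCantorSet n ⊆ Set.Icc 0 1 := by
  induction n with
  | zero => exact subset_rfl
  | succ n ih =>
    rintro x (⟨y, hy, rfl⟩ | ⟨y, hy, rfl⟩)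
    · have h := ih hy
      exact ⟨by simpa using by linarith [h.1], by simpa using by linarith [h.2]⟩
    · have h := ih hy
      exact ⟨by simpa using by linarith [h.1], by simpa using by linarith [h.2]⟩

lemma one_mem_cantorSet' : (1:ℝ) ∈ cantorSet := by
  rw [cantorSet, Set.mem_iInter]
  intro n
  induction n with
  | zero => exact ⟨zero_le_one, le_rfl⟩
  | succ n ih => exact Or.inr ⟨1, ih, by norm_num⟩

lemma mem_cantorSet_left {x : ℝ} (h0 : 0 ≤ x) (h1 : x ≤ 1/3) :
    x ∈ cantorSet ↔ 3 * x ∈ cantorSet := by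
  rw [cantorSet, Set.mem_iInter, Set.mem_iInter]
  constructor
  · intro h n
    have h' := h (n+1)
    rw [preCantorSet_succ] at h'
    rcases h' with ⟨y, hy, hyx⟩ | ⟨y, hy, hyx⟩
    · simp only at hyx
      have : y = 3 * x := by linarith
      rwa [← this]
    · have hy0 := (preCantorSet_subset_unitInterval' n hy).1
      simp only at hyx
      linarith
  · intro h n
    cases n with
    | zero => exact ⟨h0, by linarith⟩
    | succ n => exact Or.inl ⟨3 * x, h n, by ring⟩

lemma mem_cantorSet_right {x : ℝ} (h0 : 2/3 ≤ x) (h1 : x ≤ 1) :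
    x ∈ cantorSet ↔ 3 * x - 2 ∈ cantorSet := by
  rw [cantorSet, Set.mem_iInter, Set.mem_iInter]
  constructor
  · intro h n
    have h' := h (n+1)
    rw [preCantorSet_succ] at h'
    rcases h' with ⟨y, hy, hyx⟩ | ⟨y, hy, hyx⟩
    · have hy1 := (preCantorSet_subset_unitInterval' n hy).2
      simp only at hyx
      linarith
    · simp only at hyx
      have : y = 3 * x - 2 := by linarith
      rwa [← this]
  · intro h n
    cases n with
    | zero => exact ⟨by linarith, h1⟩
    | succ n => exact Or.inr ⟨3 * x - 2, h n, by ring⟩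

lemma third_mem_cantorSet : (1/3 : ℝ) ∈ cantorSet := by
  refine (mem_cantorSet_left (by norm_num) le_rfl).2 ?_
  rw [show (3:ℝ) * (1/3) = 1 by norm_num]
  exact one_mem_cantorSet'

lemma twothird_mem_cantorSet : (2/3 : ℝ) ∈ cantorSet := by
  refine (mem_cantorSet_right le_rfl (by norm_num)).2 ?_
  rw [show (3:ℝ) * (2/3) - 2 = 0 by norm_num]
  exact zero_mem_cantorSet

lemma middle_classify {x : ℝ} (hx : x ∈ cantorSet) (h1 : 1/3 ≤ x) (h2 : x ≤ 2/3) :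
    x = 1/3 ∨ x = 2/3 := by
  have h' : x ∈ preCantorSet 1 := Set.iInter_subset preCantorSet 1 hx
  rw [show (1:ℕ) = 0 + 1 from rfl, preCantorSet_succ, preCantorSet_zero] at h'
  rcases h' with ⟨y, hy, hyx⟩ | ⟨y, hy, hyx⟩
  · left
    simp only at hyx
    have := hy.2
    linarith
  · right
    simp only at hyx
    have := hy.1
    linarith

lemma kernelSet1_def' (a : ℕ) (b : ℤ) (X : Set ℝ) :
    kernelSet1 3 a b X = (fun x => (3:ℝ)^a * x - (b:ℝ)) ''
      (X ∩ Set.Icc ((b:ℝ)/3^a) (((b:ℝ)+1)/3^a)) := by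
  norm_num [kernelSet1]

lemma shrink_left (a : ℕ) (b : ℤ) (hb0 : 0 ≤ b) (hb : b < 3^a) :
    kernelSet1 3 (a+1) b cantorSet = kernelSet1 3 a b cantorSet := by
  have ht : (0:ℝ) < 3^a := by positivity
  have hb0R : (0:ℝ) ≤ (b:ℝ) := by exact_mod_cast hb0
  have hbR : (b:ℝ) + 1 ≤ 3^a := by exact_mod_cast hb
  have e1 : (b:ℝ)/3^(a+1) = ((b:ℝ)/3^a)/3 := by rw [pow_succ, div_div]
  have e2 : ((b:ℝ)+1)/3^(a+1) = (((b:ℝ)+1)/3^a)/3 := by rw [pow_succ, div_div]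
  rw [kernelSet1_def', kernelSet1_def', e1, e2]
  ext y
  simp only [Set.mem_image, Set.mem_inter_iff, Set.mem_Icc]
  constructor
  · rintro ⟨x, ⟨hxC, hx1, hx2⟩, rfl⟩
    have hd0 : (0:ℝ) ≤ (b:ℝ)/3^a := div_nonneg hb0R ht.le
    have hd3 : ((b:ℝ)+1)/3^a ≤ 1 := (div_le_one ht).2 hbR
    have hx0 : 0 ≤ x := by linarith
    have hx3 : x ≤ 1/3 := by linarith
    exact ⟨3*x, ⟨(mem_cantorSet_left hx0 hx3).1 hxC, by linarith, by linarith⟩, by ring⟩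
  · rintro ⟨z, ⟨hzC, hz1, hz2⟩, rfl⟩
    have hz01 := cantorSet_subset_unitInterval hzC
    refine ⟨z/3, ⟨?_, by linarith, by linarith⟩, by ring⟩
    have hz' : 3 * (z/3) ∈ cantorSet := by
      rw [show 3*(z/3) = z by ring]; exact hzC
    exact (mem_cantorSet_left (by linarith [hz01.1]) (by linarith [hz01.2])).2 hz'

lemma shrink_right (a : ℕ) (b : ℤ) (h2 : 2*3^a ≤ b) (hb : b < 3^(a+1)) :
    kernelSet1 3 (a+1) b cantorSet = kernelSet1 3 a (b - 2*3^a) cantorSet := by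
  have ht : (0:ℝ) < 3^a := by positivity
  have h2R : 2*(3:ℝ)^a ≤ (b:ℝ) := by exact_mod_cast h2
  have hbR : (b:ℝ) + 1 ≤ 3*3^a := by
    have : (b:ℝ) + 1 ≤ 3^(a+1) := by exact_mod_cast hb
    rw [pow_succ] at this; linarith
  have hc1 : ((b - 2*3^a : ℤ) : ℝ)/3^a = (b:ℝ)/3^a - 2 := by
    push_cast
    rw [sub_div, mul_div_assoc, div_self ht.ne', mul_one]
  have hc2 : (((b - 2*3^a : ℤ) : ℝ) + 1)/3^a = ((b:ℝ)+1)/3^a - 2 := by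
    push_cast
    rw [show (b:ℝ) - 2*3^a + 1 = ((b:ℝ) + 1) - 2*3^a by ring,
      sub_div, mul_div_assoc, div_self ht.ne', mul_one]
  have e1 : (b:ℝ)/3^(a+1) = ((b:ℝ)/3^a)/3 := by rw [pow_succ, div_div]
  have e2 : ((b:ℝ)+1)/3^(a+1) = (((b:ℝ)+1)/3^a)/3 := by rw [pow_succ, div_div]
  have hblo : 2 ≤ (b:ℝ)/3^a := (le_div_iff₀ ht).2 (by linarith)
  have hbhi : ((b:ℝ)+1)/3^a ≤ 3 := (div_le_iff₀ ht).2 (by linarith)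
  rw [kernelSet1_def', kernelSet1_def', e1, e2, hc1, hc2]
  ext y
  simp only [Set.mem_image, Set.mem_inter_iff, Set.mem_Icc]
  constructor
  · rintro ⟨x, ⟨hxC, hx1, hx2⟩, rfl⟩
    have hx0 : 2/3 ≤ x := by linarith
    have hx3 : x ≤ 1 := by linarith
    refine ⟨3*x - 2, ⟨(mem_cantorSet_right hx0 hx3).1 hxC, by linarith, by linarith⟩, ?_⟩
    push_cast
    ring
  · rintro ⟨z, ⟨hzC, hz1, hz2⟩, rfl⟩
    have hz01 := cantorSet_subset_unitInterval hzC
    refine ⟨(z+2)/3, ⟨?_, by linarith, by linarith⟩, ?_⟩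
    · have hz' : 3 * ((z+2)/3) - 2 ∈ cantorSet := by
        rw [show 3*((z+2)/3) - 2 = z by ring]; exact hzC
      exact (mem_cantorSet_right (by linarith [hz01.1]) (by linarith [hz01.2])).2 hz'
    · push_cast
      ring

lemma kernel_middle (a : ℕ) (b : ℤ) (h1 : 3^a ≤ b) (h2 : b < 2*3^a) :
    kernelSet1 3 (a+1) b cantorSet =
      (if b = 3^a then {(0:ℝ)} else ∅) ∪ (if b + 1 = 2*3^a then {(1:ℝ)} else ∅) := by
  have ht : (0:ℝ) < 3^a := by positivity
  have h1R : (3:ℝ)^a ≤ (b:ℝ) := by exact_mod_cast h1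
  have h2R : (b:ℝ) + 1 ≤ 2*3^a := by exact_mod_cast h2
  have e1 : (b:ℝ)/3^(a+1) = ((b:ℝ)/3^a)/3 := by rw [pow_succ, div_div]
  have e2 : ((b:ℝ)+1)/3^(a+1) = (((b:ℝ)+1)/3^a)/3 := by rw [pow_succ, div_div]
  have hblo : 1 ≤ (b:ℝ)/3^a := (one_le_div ht).2 h1R
  have hbhi : ((b:ℝ)+1)/3^a ≤ 2 := (div_le_iff₀ ht).2 (by linarith)
  rw [kernelSet1_def', e1, e2]
  have hmem : ∀ x : ℝ, x ∈ cantorSet → ((b:ℝ)/3^a)/3 ≤ x → x ≤ (((b:ℝ)+1)/3^a)/3 →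
      x = 1/3 ∨ x = 2/3 := by
    intro x hxC hlo hhi
    exact middle_classify hxC (by linarith) (by linarith)
  ext y
  simp only [Set.mem_image, Set.mem_inter_iff, Set.mem_Icc, Set.mem_union]
  constructor
  · rintro ⟨x, ⟨hxC, hx1, hx2⟩, rfl⟩
    rcases hmem x hxC hx1 hx2 with rfl | rfl
    · left
      have hble : (b:ℝ) ≤ 3^a := by
        have : (b:ℝ)/3^a ≤ 1 := by linarith
        calc (b:ℝ) = ((b:ℝ)/3^a) * 3^a := by field_simp
        _ ≤ 1 * 3^a := by nlinarith
        _ = 3^a := one_mul _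
      have hbe : b = 3^a := le_antisymm (by exact_mod_cast hble) h1
      rw [if_pos hbe]
      have : (3:ℝ)^(a+1) * (1/3) - (b:ℝ) = 0 := by
        rw [hbe]; push_cast; rw [pow_succ]; ring
      simpa only [Set.mem_singleton_iff] using this
    · right
      have hbge : 2*(3:ℝ)^a ≤ (b:ℝ) + 1 := by
        have h' : 2 ≤ ((b:ℝ)+1)/3^a := by linarith
        calc 2*(3:ℝ)^a ≤ (((b:ℝ)+1)/3^a) * 3^a := by nlinarith
        _ = (b:ℝ) + 1 := by field_simp
      have hbe : b + 1 = 2*3^a := le_antisymm h2 (by exact_mod_cast hbge)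
      rw [if_pos hbe]
      have : (3:ℝ)^(a+1) * (2/3) - (b:ℝ) = 1 := by
        have : (b:ℝ) = 2*3^a - 1 := by
          have := hbe
          have : ((b:ℤ):ℝ) + 1 = 2*3^a := by exact_mod_cast hbe
          linarith
        rw [this, pow_succ]; ring
      simpa only [Set.mem_singleton_iff] using this
  · rintro (hy | hy)
    · split_ifs at hy with hbe
      · simp only [Set.mem_singleton_iff] at hy
        subst hy
        have hbeR : (b:ℝ) = 3^a := by exact_mod_cast hbe
        refine ⟨1/3, ⟨third_mem_cantorSet, by rw [hbeR, div_self ht.ne'], ?_⟩, ?_⟩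
        · rw [hbeR]
          have : ((3:ℝ)^a+1)/3^a = 1 + 1/3^a := by
            rw [add_div, div_self ht.ne']
          rw [this]
          have : (0:ℝ) < 1/3^a := by positivity
          linarith
        · rw [pow_succ, hbeR]; ring
      · exact absurd hy (Set.notMem_empty _)
    · split_ifs at hy with hbe
      · simp only [Set.mem_singleton_iff] at hy
        subst hy
        have hbeR : (b:ℝ) + 1 = 2*3^a := by exact_mod_cast hbe
        have htwo : (2*(3:ℝ)^a)/3^a = 2 := by
          rw [mul_div_assoc, div_self ht.ne', mul_one]
        refine ⟨2/3, ⟨twothird_mem_cantorSet, ?_, by rw [hbeR, htwo]⟩, ?_⟩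
        · have hble : (b:ℝ)/3^a ≤ 2 := by
            rw [div_le_iff₀ ht]; linarith
          linarith
        · rw [pow_succ]
          have : (b:ℝ) = 2*3^a - 1 := by linarith
          rw [this]; ring
      · exact absurd hy (Set.notMem_empty _)

lemma kernel_zero : kernelSet1 3 0 0 cantorSet = cantorSet := by
  rw [kernelSet1_def']
  have hfun : (fun x : ℝ => (3:ℝ)^0 * x - ((0:ℤ):ℝ)) = id := by
    funext x; simp
  have hIcc : Set.Icc (((0:ℤ):ℝ)/3^0) ((((0:ℤ):ℝ)+1)/3^0) = Set.Icc 0 1 := by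
    norm_num
  rw [hfun, hIcc, Set.inter_eq_left.2 cantorSet_subset_unitInterval, Set.image_id]

lemma kernel_classify : ∀ (a : ℕ) (b : ℤ), 0 ≤ b → b < 3^a →
    kernelSet1 3 a b cantorSet = ∅ ∨ kernelSet1 3 a b cantorSet = cantorSet ∨
    kernelSet1 3 a b cantorSet = {0, 1} ∨ kernelSet1 3 a b cantorSet = {0} ∨
    kernelSet1 3 a b cantorSet = {1} := by
  intro a
  induction a with
  | zero =>
    intro b hb0 hb
    have hb' : b = 0 := by omega
    subst hb'
    exact Or.inr (Or.inl kernel_zero)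
  | succ a ih =>
    intro b hb0 hb
    have hp : (3:ℤ)^(a+1) = 3*3^a := by ring
    rcases lt_or_ge b (3^a) with h | h
    · rw [shrink_left a b hb0 h]
      exact ih b hb0 h
    rcases lt_or_ge b (2*3^a) with h2 | h2
    · rw [kernel_middle a b h h2]
      rcases eq_or_ne b (3^a) with e1 | e1 <;> rcases eq_or_ne (b+1) (2*3^a) with e2 | e2
      · right; right; left
        rw [if_pos e1, if_pos e2, Set.singleton_union]
      · right; right; right; left
        rw [if_pos e1, if_neg e2, Set.union_empty]
      · right; right; right; right
        rw [if_neg e1, if_pos e2, Set.empty_union]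
      · left
        rw [if_neg e1, if_neg e2, Set.empty_union]
    · rw [shrink_right a b h2 hb]
      have hpow : (0:ℤ) < 3^a := by positivity
      refine ih (b - 2*3^a) (by linarith) ?_
      rw [hp] at hb
      linarith

/-- The ternary (middle-thirds) Cantor set `C` is `3`-self-similar; indeed
its `3`-kernel equals the four-element collection `{C, {0, 1}, {0}, {1}}`.
(`cantorSet` is Mathlib's middle-thirds Cantor set.) -/
theorem cantorSet_three_kernel :
    (kKernel1 3 cantorSet).Finite ∧
      kKernel1 3 cantorSet = {cantorSet, {0, 1}, {0}, {1}} := by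
  have heq : kKernel1 3 cantorSet = {cantorSet, {0, 1}, {0}, {1}} := by
    ext S
    constructor
    · rintro ⟨hne, a, b, hb0, hb, rfl⟩
      have hb' : b < 3^a := by exact_mod_cast hb
      rcases kernel_classify a b hb0 hb' with h | h | h | h | h
      · rw [h] at hne
        exact absurd hne (by simp)
      · rw [h]; exact Or.inl rfl
      · rw [h]; exact Or.inr (Or.inl rfl)
      · rw [h]; exact Or.inr (Or.inr (Or.inl rfl))
      · rw [h]; exact Or.inr (Or.inr (Or.inr rfl))
    · rintro (rfl | rfl | rfl | rfl)
      · refine ⟨⟨0, zero_mem_cantorSet⟩, 0, 0, le_rfl, by norm_num, kernel_zero.symm⟩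
      · refine ⟨⟨0, Or.inl rfl⟩, 1, 1, by norm_num, by norm_num, ?_⟩
        rw [show (1:ℕ) = 0 + 1 from rfl, kernel_middle 0 1 (by norm_num) (by norm_num),
          if_pos (by norm_num), if_pos (by norm_num), Set.singleton_union]
      · refine ⟨⟨0, rfl⟩, 2, 3, by norm_num, by norm_num, ?_⟩
        rw [show (2:ℕ) = 1 + 1 from rfl, kernel_middle 1 3 (by norm_num) (by norm_num)]
        norm_num
      · refine ⟨⟨1, rfl⟩, 2, 5, by norm_num, by norm_num, ?_⟩
        rw [show (2:ℕ) = 1 + 1 from rfl, kernel_middle 1 5 (by norm_num) (by norm_num)]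
        norm_num
  refine ⟨heq ▸ ?_, heq⟩
  exact (((Set.finite_singleton _).insert _).insert _).insert _
end

section
/- Let X be a k-self-similar subset of [0,1]^d with k-kernel {X_0,…,X_{n−1}}, X = X_0, and let A_{ij} be the number of (1/k)-scaled grid copies of X_i contained in X_j. Then for every p ≥ 1, the number of closed (1/k^p)-grid hypercubes ∏_i [c_i/k^p,(c_i+1)/k^p] (with 0 ≤ c_i < k^p integers) having nonempty intersection with X equals 𝟙^T · A^p · e_0. -/
/-- The level-1 piece of `Y ⊆ [0,1]^d` at the grid cube indexed by `c ∈ {0,…,k−1}^d`: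
the intersection of `Y` with `∏_i [c_i/k, (c_i+1)/k]`, rescaled back to `[0,1]^d`. -/
noncomputable def gridPiece (k d : ℕ) (Y : Set (Fin d → ℝ)) (c : Fin d → ℕ) :
    Set (Fin d → ℝ) :=
  (fun x i => (k : ℝ) * x i - (c i : ℝ)) ''
    (Y ∩ Set.Icc (fun i => (c i : ℝ) / (k : ℝ)) (fun i => ((c i : ℝ) + 1) / (k : ℝ)))

/-!
Blowing a level-one grid cube of `Y` up by the factor `k` carries the level-`(p+1)` grid cubes
inside it onto the level-`p` grid cubes of `[0,1]^d`, so the number `N_{p+1}(Y)` of level-`(p+1)`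
cubes meeting `Y` is the sum of `N_p` over the `k^d` level-one pieces of `Y`. For `Y = X_j` the
nonempty pieces are kernel elements, `X_i` occurring `A_{ij}` times, hence
`N_{p+1}(X_j) = ∑ i, A_{ij} N_p(X_i)` and `N_1(X_j) = ∑ i, A_{ij}`; so `N_p(X_j) = (𝟙ᵀ A^p)_j`.
-/

def gridCube (k p : ℕ) {d : ℕ} (c : Fin d → ℕ) : Set (Fin d → ℝ) :=
  Set.Icc (fun i => (c i : ℝ) / (k : ℝ) ^ p) (fun i => ((c i : ℝ) + 1) / (k : ℝ) ^ p)

noncomputable def gridCubeCount (k d p : ℕ) (Y : Set (Fin d → ℝ)) : ℕ :=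
  Nat.card {c : Fin d → ℕ // (∀ i, c i < k ^ p) ∧ (Y ∩ gridCube k p c).Nonempty}

section Geometry

variable {k d : ℕ}

lemma mem_gridCube_iff (hk : 0 < k) (p : ℕ) (c : Fin d → ℕ) (x : Fin d → ℝ) :
    x ∈ gridCube k p c ↔ ∀ i, (c i : ℝ) ≤ (k : ℝ) ^ p * x i ∧ (k : ℝ) ^ p * x i ≤ c i + 1 := by
  have hkp : (0 : ℝ) < (k : ℝ) ^ p := by positivity
  simp only [gridCube, Set.mem_Icc, Pi.le_def, div_le_iff₀' hkp, le_div_iff₀' hkp, forall_and]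

lemma gridPiece_eq_image (Y : Set (Fin d → ℝ)) (c : Fin d → ℕ) :
    gridPiece k d Y c = (fun x i => (k : ℝ) * x i - c i) '' (Y ∩ gridCube k 1 c) := by
  simp only [gridPiece, gridCube, pow_one]

lemma gridPiece_subset_Icc (hk : 0 < k) (Y : Set (Fin d → ℝ)) (c : Fin d → ℕ) :
    gridPiece k d Y c ⊆ Set.Icc 0 1 := by
  rw [gridPiece_eq_image]
  rintro _ ⟨x, ⟨-, hx⟩, rfl⟩
  rw [mem_gridCube_iff hk] at hx
  simp only [pow_one] at hx
  constructor <;> intro i <;> simp only [Pi.zero_apply, Pi.one_apply] <;> linarith [hx i]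

lemma gridCube_succ_eq (hk : 0 < k) (p : ℕ) (c₁ c₂ : Fin d → ℕ) (hc₂ : ∀ i, c₂ i < k ^ p) :
    gridCube k (p + 1) (fun i => c₂ i + k ^ p * c₁ i) =
      gridCube k 1 c₁ ∩ (fun x i => (k : ℝ) * x i - c₁ i) ⁻¹' gridCube k p c₂ := by
  have hkp : (0 : ℝ) < (k : ℝ) ^ p := by positivity
  have hc₂' : ∀ i, (c₂ i : ℝ) + 1 ≤ (k : ℝ) ^ p := fun i => by exact_mod_cast hc₂ i
  ext x
  simp only [Set.mem_inter_iff, Set.mem_preimage, mem_gridCube_iff hk, pow_succ,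
    Nat.cast_add, Nat.cast_mul, Nat.cast_pow, ← forall_and]
  refine forall_congr' fun i =>
    ⟨fun ⟨hlo, hhi⟩ => ⟨⟨?_, ?_⟩, ?_, ?_⟩, fun ⟨_, hlo, hhi⟩ => ⟨?_, ?_⟩⟩
  · nlinarith [(Nat.cast_nonneg (c₂ i) : (0 : ℝ) ≤ c₂ i)]
  · nlinarith [hc₂' i]
  all_goals nlinarith

end Geometry

section Counting

variable {k d : ℕ}

lemma inter_gridCube_succ_nonempty_iff (hk : 0 < k) (Y : Set (Fin d → ℝ)) (p : ℕ)
    (c₁ c₂ : Fin d → ℕ) (hc₂ : ∀ i, c₂ i < k ^ p) :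
    (Y ∩ gridCube k (p + 1) (fun i => c₂ i + k ^ p * c₁ i)).Nonempty ↔
      (gridPiece k d Y c₁ ∩ gridCube k p c₂).Nonempty := by
  rw [gridCube_succ_eq hk p c₁ c₂ hc₂, gridPiece_eq_image, ← Set.image_inter_preimage,
    Set.image_nonempty, Set.inter_assoc]

lemma gridCubeCount_eq_card_fin (p : ℕ) (Y : Set (Fin d → ℝ)) :
    gridCubeCount k d p Y =
      Nat.card {c : Fin d → Fin (k ^ p) // (Y ∩ gridCube k p (fun i => c i)).Nonempty} :=
  Nat.card_congr
    { toFun c := ⟨fun i => ⟨c.1 i, c.2.1 i⟩, c.2.2⟩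
      invFun c := ⟨fun i => c.1 i, fun i => (c.1 i).isLt, c.2⟩
      left_inv _ := rfl
      right_inv _ := rfl }

def gridIndexSplit (k p d : ℕ) :
    (Fin d → Fin k) × (Fin d → Fin (k ^ p)) ≃ (Fin d → Fin (k ^ (p + 1))) :=
  (Equiv.arrowProdEquivProdArrow _ _ _).symm.trans
    (Equiv.piCongrRight fun _ => finProdFinEquiv.trans (finCongr (pow_succ' k p).symm))

lemma gridIndexSplit_apply_val (x : (Fin d → Fin k) × (Fin d → Fin (k ^ p))) (i : Fin d) :
    (gridIndexSplit k p d x i : ℕ) = x.2 i + k ^ p * x.1 i := by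
  simp [gridIndexSplit, finProdFinEquiv_apply_val]

lemma gridCubeCount_succ (hk : 0 < k) (p : ℕ) (Y : Set (Fin d → ℝ)) :
    gridCubeCount k d (p + 1) Y =
      ∑ c : Fin d → Fin k, gridCubeCount k d p (gridPiece k d Y (fun i => c i)) := by
  have hsplit : ∀ x : (Fin d → Fin k) × (Fin d → Fin (k ^ p)),
      (gridPiece k d Y (fun i => x.1 i) ∩ gridCube k p (fun i => x.2 i)).Nonempty ↔
        (Y ∩ gridCube k (p + 1) (fun i => gridIndexSplit k p d x i)).Nonempty := fun x => by
    simp only [gridIndexSplit_apply_val]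
    exact (inter_gridCube_succ_nonempty_iff hk Y p _ _ fun i => (x.2 i).isLt).symm
  calc gridCubeCount k d (p + 1) Y
      = Nat.card {x : (Fin d → Fin k) × (Fin d → Fin (k ^ p)) //
          (gridPiece k d Y (fun i => x.1 i) ∩ gridCube k p (fun i => x.2 i)).Nonempty} := by
        rw [gridCubeCount_eq_card_fin]
        exact Nat.card_congr ((gridIndexSplit k p d).subtypeEquiv hsplit).symm
    _ = ∑ c : Fin d → Fin k, Nat.card {c' : Fin d → Fin (k ^ p) //
          (gridPiece k d Y (fun i => c i) ∩ gridCube k p (fun i => c' i)).Nonempty} := by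
        rw [← Nat.card_sigma]
        exact Nat.card_congr (Equiv.subtypeProdEquivSigmaSubtype
          fun (c : Fin d → Fin k) (c' : Fin d → Fin (k ^ p)) =>
            (gridPiece k d Y (fun i => c i) ∩ gridCube k p (fun i => c' i)).Nonempty)
    _ = _ := by simp only [gridCubeCount_eq_card_fin]

lemma gridCubeCount_empty (p : ℕ) : gridCubeCount k d p ∅ = 0 := by
  simp [gridCubeCount]

open Classical in
lemma gridCubeCount_zero_of_subset_Icc {Z : Set (Fin d → ℝ)} (hZ : Z ⊆ Set.Icc 0 1) :
    gridCubeCount k d 0 Z = if Z.Nonempty then 1 else 0 := by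
  split_ifs with hZne
  · have hcube : gridCube k 0 (0 : Fin d → ℕ) = Set.Icc 0 1 := by
      simp [gridCube, Pi.zero_def, Pi.one_def]
    rw [gridCubeCount, Nat.card_eq_one_iff_unique]
    refine ⟨⟨fun a b => Subtype.ext (funext fun i => ?_)⟩,
      ⟨⟨0, by simp, by rwa [hcube, Set.inter_eq_left.2 hZ]⟩⟩⟩
    have ha : a.1 i < 1 := by simpa using a.2.1 i
    have hb : b.1 i < 1 := by simpa using b.2.1 i
    omega
  · rw [Set.not_nonempty_iff_eq_empty.1 hZne, gridCubeCount_empty]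

end Counting

lemma sum_apply_eq_sum_card_smul {α β ι M : Type*} [Fintype α] [Fintype ι] [AddCommMonoid M]
    (S : α → Set β) (T : ι → Set β) (hne : ∀ i, (T i).Nonempty) (hinj : Function.Injective T)
    (hS : ∀ a, (S a).Nonempty → ∃ i, S a = T i) (g : Set β → M) (hg : g ∅ = 0) :
    ∑ a, g (S a) = ∑ i, Nat.card {a // S a = T i} • g (T i) := by
  classical
  have hpoint : ∀ a, g (S a) = ∑ i, if S a = T i then g (T i) else 0 := fun a => by
    by_cases hSa : (S a).Nonempty
    · obtain ⟨i₀, hi₀⟩ := hS a hSa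
      simp [hi₀, hinj.eq_iff]
    · rw [Set.not_nonempty_iff_eq_empty.1 hSa, hg]
      simp [fun i => (hne i).ne_empty.symm]
  simp only [hpoint]
  rw [Finset.sum_comm]
  refine Finset.sum_congr rfl fun i _ => ?_
  rw [← Finset.sum_filter, Finset.sum_const, Nat.card_eq_fintype_card, Fintype.card_subtype]

section Kernel

variable {k d n : ℕ} {Xs : Fin (n + 1) → Set (Fin d → ℝ)}
  {A : Matrix (Fin (n + 1)) (Fin (n + 1)) ℕ}

lemma sum_gridPiece_eq_sum_mul (hne : ∀ i, (Xs i).Nonempty) (hinj : Function.Injective Xs)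
    (hclosed : ∀ j (c : Fin d → Fin k),
      (gridPiece k d (Xs j) (fun l => (c l : ℕ))).Nonempty →
        ∃ i, gridPiece k d (Xs j) (fun l => (c l : ℕ)) = Xs i)
    (hA : ∀ i j, A i j =
      Nat.card {c : Fin d → Fin k // gridPiece k d (Xs j) (fun l => (c l : ℕ)) = Xs i})
    (g : Set (Fin d → ℝ) → ℕ) (hg : g ∅ = 0) (j : Fin (n + 1)) :
    ∑ c : Fin d → Fin k, g (gridPiece k d (Xs j) (fun l => c l)) = ∑ i, A i j * g (Xs i) := by
  simp only [sum_apply_eq_sum_card_smul _ Xs hne hinj (hclosed j) g hg, ← hA, smul_eq_mul]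

lemma gridCubeCount_eq_sum_pow (hk : 0 < k) (hne : ∀ i, (Xs i).Nonempty)
    (hinj : Function.Injective Xs)
    (hclosed : ∀ j (c : Fin d → Fin k),
      (gridPiece k d (Xs j) (fun l => (c l : ℕ))).Nonempty →
        ∃ i, gridPiece k d (Xs j) (fun l => (c l : ℕ)) = Xs i)
    (hA : ∀ i j, A i j =
      Nat.card {c : Fin d → Fin k // gridPiece k d (Xs j) (fun l => (c l : ℕ)) = Xs i})
    (p : ℕ) (hp : 1 ≤ p) (j : Fin (n + 1)) :
    gridCubeCount k d p (Xs j) = ∑ i, (A ^ p) i j := by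
  classical
  induction p, hp using Nat.le_induction generalizing j with
  | base =>
    have hpiece : ∀ c : Fin d → Fin k, gridCubeCount k d 0 (gridPiece k d (Xs j) (fun l => c l)) =
        if (gridPiece k d (Xs j) (fun l => c l)).Nonempty then 1 else 0 := fun c =>
      gridCubeCount_zero_of_subset_Icc (gridPiece_subset_Icc hk _ _)
    rw [gridCubeCount_succ hk, Finset.sum_congr rfl fun c _ => hpiece c,
      sum_gridPiece_eq_sum_mul hne hinj hclosed hA (fun Z => if Z.Nonempty then 1 else 0)
        (by simp)]
    simp [hne]
  | succ p _ ih =>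
    rw [gridCubeCount_succ hk, sum_gridPiece_eq_sum_mul hne hinj hclosed hA _
      (gridCubeCount_empty p)]
    simp only [ih, Finset.mul_sum, pow_succ, Matrix.mul_apply]
    rw [Finset.sum_comm]
    simp only [mul_comm]

end Kernel

theorem grid_cube_count_eq_matrix_power_general {d k n : ℕ} (hk : 2 ≤ k)
    (X : Set (Fin d → ℝ))
    (Xs : Fin (n + 1) → Set (Fin d → ℝ)) (hX0 : Xs 0 = X)
    (hne : ∀ i, (Xs i).Nonempty)
    (hinj : Function.Injective Xs)
    (hclosed : ∀ j (c : Fin d → Fin k),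
      (gridPiece k d (Xs j) (fun l => (c l : ℕ))).Nonempty →
        ∃ i, gridPiece k d (Xs j) (fun l => (c l : ℕ)) = Xs i)
    (A : Matrix (Fin (n + 1)) (Fin (n + 1)) ℕ)
    (hA : ∀ i j, A i j =
      Nat.card {c : Fin d → Fin k // gridPiece k d (Xs j) (fun l => (c l : ℕ)) = Xs i}) :
    ∀ p : ℕ, 1 ≤ p →
      Nat.card {c : Fin d → ℕ // (∀ i, c i < k ^ p) ∧
          (X ∩ Set.Icc (fun i => (c i : ℝ) / (k : ℝ) ^ p)
            (fun i => ((c i : ℝ) + 1) / (k : ℝ) ^ p)).Nonempty} =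
        ∑ i, (A ^ p) i 0 := by
  subst hX0
  exact fun p hp => gridCubeCount_eq_sum_pow (by omega) hne hinj hclosed hA p hp 0

/-- Let `X ⊆ [0,1]^d` be `k`-self-similar with `k`-kernel
`{X_0, …, X_n}`, `X = X_0` (each kernel element nonempty, every nonempty level-1 piece
of a kernel element again a kernel element), and let `A_{ij}` be the number of
`(1/k)`-scaled grid copies of `X_i` contained in `X_j`. Then for every `p ≥ 1`, the
number of closed `(1/k^p)`-grid hypercubes `∏_i [c_i/k^p, (c_i+1)/k^p]`
(`0 ≤ c_i < k^p`) having nonempty intersection with `X` equals `𝟙ᵀ · A^p · e_0`. -/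
theorem grid_cube_count_eq_matrix_power {d k n : ℕ} (hk : 2 ≤ k)
    (X : Set (Fin d → ℝ)) (hXc : IsCompact X) (hX1 : X ⊆ Set.Icc 0 1)
    (Xs : Fin (n + 1) → Set (Fin d → ℝ)) (hX0 : Xs 0 = X)
    (hne : ∀ i, (Xs i).Nonempty)
    (hinj : Function.Injective Xs)
    (hclosed : ∀ j (c : Fin d → Fin k),
      (gridPiece k d (Xs j) (fun l => (c l : ℕ))).Nonempty →
        ∃ i, gridPiece k d (Xs j) (fun l => (c l : ℕ)) = Xs i)
    (A : Matrix (Fin (n + 1)) (Fin (n + 1)) ℕ)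
    (hA : ∀ i j, A i j =
      Nat.card {c : Fin d → Fin k // gridPiece k d (Xs j) (fun l => (c l : ℕ)) = Xs i}) :
    ∀ p : ℕ, 1 ≤ p →
      Nat.card {c : Fin d → ℕ // (∀ i, c i < k ^ p) ∧
          (X ∩ Set.Icc (fun i => (c i : ℝ) / (k : ℝ) ^ p)
            (fun i => ((c i : ℝ) + 1) / (k : ℝ) ^ p)).Nonempty} =
        ∑ i, (A ^ p) i 0 :=
  grid_cube_count_eq_matrix_power_general hk X Xs hX0 hne hinj hclosed A hA
end
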